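/- Finite-horizon tube-exit probability (Corollary 1). In the stochastic inner recursion setup, the probability that the stochastic trajectory exits the r-tube within the horizon M satisfies P(τ_r ≤ M) ≤ (M / r²) · σ²ν² / (1 − ρ_r²). -/

import Mathlib

open MeasureTheory ProbabilityTheory

/-!
Freeze the error once the trajectory has left the tube: the stopped error `S k` is `e (k + 1)`
as long as `e 1, …, e k` stayed in the tube, and the bare noise `σ ξ k` afterwards. It splits as
`S k = A k + σ ξ k`, where the drift `A k` is a function of `ξ 0, …, ξ (k - 1)` only and, by the
Lipschitz bound inside the tube, `‖A (k + 1)‖ ≤ ρ ‖S k‖`. Independence and centring of the noise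
kill the cross term, so `E‖S (k + 1)‖² ≤ ρ² E‖S k‖² + σ²ν²` and hence `E‖S k‖² ≤ σ²ν² / (1 - ρ²)`.
At the first exit time the stopped error is the true error, so a union bound over the `M` possible
exit times and Chebyshev's inequality give the claim.
-/

open scoped RealInnerProductSpace

theorem MeasureTheory.measureReal_lt_norm_le_integral_norm_sq_div {Ω E : Type*}
    {mΩ : MeasurableSpace Ω} {μ : Measure Ω} [IsFiniteMeasure μ] [NormedAddCommGroup E]
    {X : Ω → E} (hX : Integrable (fun ω => ‖X ω‖ ^ 2) μ) {r : ℝ} (hr : 0 < r) :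
    μ.real {ω | r < ‖X ω‖} ≤ (∫ ω, ‖X ω‖ ^ 2 ∂μ) / r ^ 2 := by
  have hmarkov := mul_meas_ge_le_integral_of_nonneg
    (Filter.Eventually.of_forall fun ω => sq_nonneg ‖X ω‖) hX (r ^ 2)
  have hsub : {ω | r < ‖X ω‖} ⊆ {ω | r ^ 2 ≤ ‖X ω‖ ^ 2} := fun ω hω =>
    pow_le_pow_left₀ hr.le hω.le 2
  rw [le_div_iff₀ (by positivity), mul_comm]
  exact (mul_le_mul_of_nonneg_left (measureReal_mono hsub) (by positivity)).trans hmarkov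

namespace ProbabilityTheory

variable {Ω : Type*} {mΩ : MeasurableSpace Ω} {μ : Measure Ω}

section InnerProduct

variable {E : Type*} [NormedAddCommGroup E] [InnerProductSpace ℝ E] [CompleteSpace E]
  [MeasurableSpace E] [BorelSpace E]

theorem IndepFun.integral_inner_eq_zero {X Y : Ω → E} (hXY : X ⟂ᵢ[μ] Y)
    (hX : Integrable X μ) (hY : Integrable Y μ) (hY0 : μ[Y] = 0) :
    ∫ ω, ⟪X ω, Y ω⟫ ∂μ = 0 := by
  have h : ∫ ω, ⟪X ω, Y ω⟫ ∂μ = ⟪μ[X], μ[Y]⟫ := hXY.integral_bilin hX hY (innerSL ℝ)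
  rw [h, hY0, inner_zero_right]

theorem IndepFun.integral_norm_add_smul_sq [IsFiniteMeasure μ] {X Y : Ω → E}
    (hXY : X ⟂ᵢ[μ] Y) (hX : MemLp X 2 μ) (hY : MemLp Y 2 μ) (hY0 : μ[Y] = 0) (c : ℝ) :
    ∫ ω, ‖X ω + c • Y ω‖ ^ 2 ∂μ = ∫ ω, ‖X ω‖ ^ 2 ∂μ + c ^ 2 * ∫ ω, ‖Y ω‖ ^ 2 ∂μ := by
  have hexpand : ∀ ω, ‖X ω + c • Y ω‖ ^ 2
      = ‖X ω‖ ^ 2 + 2 * c * ⟪X ω, Y ω⟫ + c ^ 2 * ‖Y ω‖ ^ 2 := fun ω => by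
    rw [norm_add_sq_real, real_inner_smul_right, norm_smul, mul_pow, Real.norm_eq_abs, sq_abs]
    ring
  have hX1 := hX.integrable one_le_two
  have hY1 := hY.integrable one_le_two
  have hX2 : Integrable (fun ω => ‖X ω‖ ^ 2) μ := hX.integrable_norm_pow'
  have hY2 : Integrable (fun ω => c ^ 2 * ‖Y ω‖ ^ 2) μ := hY.integrable_norm_pow'.const_mul _
  have hcross : Integrable (fun ω => 2 * c * ⟪X ω, Y ω⟫) μ :=
    (hXY.integrable_bilin hX1 hY1 (innerSL ℝ)).const_mul _
  have hXcross : Integrable (fun ω => ‖X ω‖ ^ 2 + 2 * c * ⟪X ω, Y ω⟫) μ := hX2.add hcross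
  simp_rw [hexpand]
  rw [integral_add hXcross hY2, integral_add hX2 hcross, integral_const_mul,
    integral_const_mul, hXY.integral_inner_eq_zero hX1 hY1 hY0]
  ring

end InnerProduct

theorem iIndepFun.indepFun_of_measurable_iSup {ι β γ : Type*} [mβ : MeasurableSpace β]
    [MeasurableSpace γ] {f : ι → Ω → β} (hf : iIndepFun f μ) (hfm : ∀ i, Measurable (f i))
    {S : Set ι} {j : ι} (hj : j ∉ S) {X : Ω → γ}
    (hX : Measurable[⨆ i ∈ S, mβ.comap (f i)] X) : X ⟂ᵢ[μ] f j := by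
  have h := indep_iSup_of_disjoint (fun i => (hfm i).comap_le) hf.iIndep
    (Set.disjoint_singleton_right.2 hj)
  simp only [Set.mem_singleton_iff, iSup_iSup_eq_left] at h
  exact (IndepFun_iff_Indep _ _ _).2 (indep_of_indep_of_le_left h hX.comap_le)

end ProbabilityTheory

section PastNoise

variable {Ω E : Type*} {mΩ : MeasurableSpace Ω} [mE : MeasurableSpace E]

abbrev pastNoise (ξ : ℕ → Ω → E) (k : ℕ) : MeasurableSpace Ω :=
  ⨆ i < k, mE.comap (ξ i)

variable {ξ : ℕ → Ω → E}

theorem measurable_pastNoise {i k : ℕ} (hi : i < k) : Measurable[pastNoise ξ k] (ξ i) :=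
  Measurable.of_comap_le (le_iSup₂ (f := fun i (_ : i < k) => mE.comap (ξ i)) i hi)

theorem pastNoise_mono : Monotone (pastNoise ξ) := fun _ _ hkl =>
  iSup₂_mono' fun i hi => ⟨i, hi.trans_le hkl, le_rfl⟩

theorem pastNoise_le (hξ : ∀ i, Measurable (ξ i)) (k : ℕ) : pastNoise ξ k ≤ mΩ :=
  iSup₂_le fun i _ => (hξ i).comap_le

theorem indepFun_of_measurable_pastNoise {μ : Measure Ω} {M k : ℕ}
    (hξ : iIndepFun (fun m : Fin M => ξ m) μ) (hξm : ∀ i, Measurable (ξ i)) (hk : k < M)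
    {γ : Type*} [MeasurableSpace γ] {X : Ω → γ} (hX : Measurable[pastNoise ξ k] X) :
    X ⟂ᵢ[μ] ξ k := by
  refine hξ.indepFun_of_measurable_iSup (fun i => hξm i) (S := {i | (i : ℕ) < k})
    (j := ⟨k, hk⟩) (by simp) (hX.mono ?_ le_rfl)
  exact iSup₂_le fun i hi => le_iSup₂_of_le (⟨i, hi.trans hk⟩ : Fin M) hi le_rfl

end PastNoise

section Tube

variable {Ω E : Type*} [NormedAddCommGroup E]

def tubeEvent (e : ℕ → Ω → E) (r : ℝ) (k : ℕ) : Set Ω :=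
  {ω | ∀ j ∈ Finset.Icc 1 k, ‖e j ω‖ ≤ r}

variable {e : ℕ → Ω → E} {r : ℝ}

theorem tubeEvent_succ_subset (k : ℕ) : tubeEvent e r (k + 1) ⊆ tubeEvent e r k :=
  fun _ hω j hj => hω j (Finset.Icc_subset_Icc_right k.le_succ hj)

theorem measurableSet_tubeEvent [MeasurableSpace E] [OpensMeasurableSpace E]
    {m : MeasurableSpace Ω} {k : ℕ} (he : ∀ j ∈ Finset.Icc 1 k, Measurable[m] (e j)) :
    MeasurableSet[m] (tubeEvent e r k) := by
  have : tubeEvent e r k = ⋂ j ∈ Finset.Icc 1 k, {ω | ‖e j ω‖ ≤ r} := by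
    ext ω; simp [tubeEvent]
  rw [this]
  exact Finset.measurableSet_biInter _ fun j hj => measurableSet_le (he j hj).norm measurable_const

variable [NormedSpace ℝ E]

noncomputable def stoppedDrift (e ξ : ℕ → Ω → E) (σ r : ℝ) (k : ℕ) : Ω → E :=
  (tubeEvent e r k).indicator fun ω => e (k + 1) ω - σ • ξ k ω

variable {ξ : ℕ → Ω → E} {σ : ℝ}

theorem stoppedDrift_add_smul_of_mem {k : ℕ} {ω : Ω} (hω : ω ∈ tubeEvent e r k) :
    stoppedDrift e ξ σ r k ω + σ • ξ k ω = e (k + 1) ω := by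
  simp [stoppedDrift, hω]

theorem setOf_exists_lt_norm_subset_biUnion (M : ℕ) :
    {ω | ∃ k, 1 ≤ k ∧ k ≤ M ∧ r < ‖e k ω‖}
      ⊆ ⋃ k ∈ Finset.range M, {ω | r < ‖stoppedDrift e ξ σ r k ω + σ • ξ k ω‖} := by
  classical
  intro ω hexit
  obtain ⟨hn1, hnM, hnr⟩ := Nat.find_spec hexit
  obtain ⟨k, hk⟩ : ∃ k, Nat.find hexit = k + 1 := Nat.exists_eq_add_of_le' hn1
  have hω : ω ∈ tubeEvent e r k := fun j hj => by
    rw [Finset.mem_Icc] at hj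
    by_contra! hjr
    exact Nat.find_min hexit (m := j) (by omega) ⟨hj.1, by omega, hjr⟩
  refine Set.mem_biUnion (Finset.mem_range.2 (show k < M by omega)) ?_
  show r < ‖_‖
  rwa [stoppedDrift_add_smul_of_mem hω, ← hk]

end Tube

section Contraction

variable {Ω E : Type*} {mΩ : MeasurableSpace Ω} {μ : Measure Ω}
  [NormedAddCommGroup E] [InnerProductSpace ℝ E] {A ξ : ℕ → Ω → E} {M : ℕ} {σ ρ : ℝ}

theorem memLp_two_of_norm_succ_le (hA0 : A 0 = 0) (hA : ∀ k < M, AEStronglyMeasurable (A k) μ)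
    (hξ : ∀ k < M, MemLp (ξ k) 2 μ)
    (hAA : ∀ k, k + 1 < M → ∀ ω, ‖A (k + 1) ω‖ ≤ ρ * ‖A k ω + σ • ξ k ω‖) :
    ∀ k < M, MemLp (A k) 2 μ
  | 0, _ => by simp [hA0]
  | k + 1, hk => (((memLp_two_of_norm_succ_le hA0 hA hξ hAA k (by omega)).add
      ((hξ k (by omega)).const_smul σ)).of_le_mul (hA (k + 1) hk)
      (Filter.Eventually.of_forall (hAA k hk)))

theorem integral_norm_add_smul_sq_le_of_contraction [IsProbabilityMeasure μ] [CompleteSpace E]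
    [MeasurableSpace E] [BorelSpace E] {ν : ℝ} (hρ0 : 0 ≤ ρ) (hρ1 : ρ < 1) (hA0 : A 0 = 0)
    (hA : ∀ k < M, MemLp (A k) 2 μ) (hAξ : ∀ k < M, A k ⟂ᵢ[μ] ξ k)
    (hξ : ∀ k < M, MemLp (ξ k) 2 μ) (hξ0 : ∀ k < M, μ[ξ k] = 0)
    (hξν : ∀ k < M, ∫ ω, ‖ξ k ω‖ ^ 2 ∂μ ≤ ν ^ 2)
    (hAA : ∀ k, k + 1 < M → ∀ ω, ‖A (k + 1) ω‖ ≤ ρ * ‖A k ω + σ • ξ k ω‖) :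
    ∀ k < M, ∫ ω, ‖A k ω + σ • ξ k ω‖ ^ 2 ∂μ ≤ σ ^ 2 * ν ^ 2 / (1 - ρ ^ 2) := by
  set C := σ ^ 2 * ν ^ 2 / (1 - ρ ^ 2)
  have hρ2 : 0 < 1 - ρ ^ 2 := by nlinarith
  have hC0 : 0 ≤ C := by positivity
  have hC : ρ ^ 2 * C + σ ^ 2 * ν ^ 2 = C := by
    simp only [C]
    field_simp
    ring
  have hstep : ∀ k < M, ∫ ω, ‖A k ω + σ • ξ k ω‖ ^ 2 ∂μ
      ≤ ∫ ω, ‖A k ω‖ ^ 2 ∂μ + σ ^ 2 * ν ^ 2 := fun k hk => by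
    rw [(hAξ k hk).integral_norm_add_smul_sq (hA k hk) (hξ k hk) (hξ0 k hk)]
    gcongr
    exact hξν k hk
  -- the invariant `∫ ‖A k‖² ≤ ρ² C` closes up because `ρ² (ρ² C + σ²ν²) = ρ² C`
  have hdrift : ∀ k < M, ∫ ω, ‖A k ω‖ ^ 2 ∂μ ≤ ρ ^ 2 * C := by
    intro k hk
    induction k with
    | zero => simpa [hA0] using mul_nonneg (sq_nonneg ρ) hC0
    | succ k ih =>
      calc ∫ ω, ‖A (k + 1) ω‖ ^ 2 ∂μ ≤ ∫ ω, ρ ^ 2 * ‖A k ω + σ • ξ k ω‖ ^ 2 ∂μ := by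
            refine integral_mono_of_nonneg (Filter.Eventually.of_forall fun ω => by positivity)
              ?_ (Filter.Eventually.of_forall fun ω => show _ ≤ ρ ^ 2 * _ from ?_)
            · exact (((hA k (by omega)).add
                ((hξ k (by omega)).const_smul σ)).integrable_norm_pow').const_mul _
            · rw [← mul_pow]
              exact pow_le_pow_left₀ (norm_nonneg _) (hAA k hk ω) 2
        _ ≤ ρ ^ 2 * C := by
            rw [integral_const_mul]
            gcongr
            linarith [hstep k (by omega), ih (by omega)]
  intro k hk
  linarith [hstep k hk, hdrift k hk]

end Contraction

section Trajectory

variable {Ω E : Type*} [NormedAddCommGroup E] [NormedSpace ℝ E] {F : E → E} {z : ℕ → E}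
  {ξ ζ : ℕ → Ω → E} {σ r ρ : ℝ} {M : ℕ}

theorem trajectory_error_succ_sub_noise (hz : ∀ m, 1 ≤ m → m < M → z (m + 1) = F (z m))
    (hζ : ∀ m, 1 ≤ m → m < M → ∀ ω, ζ (m + 1) ω = F (ζ m ω) + σ • ξ m ω)
    {k : ℕ} (hk1 : 1 ≤ k) (hkM : k < M) (ω : Ω) :
    ζ (k + 1) ω - z (k + 1) - σ • ξ k ω = F (ζ k ω) - F (z k) := by
  rw [hζ k hk1 hkM, hz k hk1 hkM]
  abel

theorem stoppedDrift_zero (hζ1 : ∀ ω, ζ 1 ω = z 1 + σ • ξ 0 ω) :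
    stoppedDrift (fun k ω => ζ k ω - z k) ξ σ r 0 = 0 := by
  ext ω : 1
  simp [stoppedDrift, hζ1]

theorem norm_stoppedDrift_succ_le (hz : ∀ m, 1 ≤ m → m < M → z (m + 1) = F (z m))
    (hζ : ∀ m, 1 ≤ m → m < M → ∀ ω, ζ (m + 1) ω = F (ζ m ω) + σ • ξ m ω)
    (hr : 0 ≤ r) (hρ0 : 0 ≤ ρ)
    (hLip : ∀ a ∈ ⋃ m ∈ Set.Icc 1 M, Metric.closedBall (z m) r,
            ∀ b ∈ ⋃ m ∈ Set.Icc 1 M, Metric.closedBall (z m) r,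
            ‖F a - F b‖ ≤ ρ * ‖a - b‖)
    {k : ℕ} (hk : k + 1 < M) (ω : Ω) :
    ‖stoppedDrift (fun k ω => ζ k ω - z k) ξ σ r (k + 1) ω‖
      ≤ ρ * ‖stoppedDrift (fun k ω => ζ k ω - z k) ξ σ r k ω + σ • ξ k ω‖ := by
  by_cases hω : ω ∈ tubeEvent (fun k ω => ζ k ω - z k) r (k + 1)
  · rw [stoppedDrift_add_smul_of_mem (tubeEvent_succ_subset k hω), stoppedDrift,
      Set.indicator_of_mem hω, trajectory_error_succ_sub_noise hz hζ (by omega) hk]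
    have hmem : k + 1 ∈ Set.Icc 1 M := ⟨by omega, by omega⟩
    refine hLip _ (Set.mem_biUnion hmem ?_) _
      (Set.mem_biUnion hmem (Metric.mem_closedBall_self hr))
    simpa [dist_eq_norm] using hω (k + 1) (by simp)
  · simp only [stoppedDrift, Set.indicator_of_notMem hω, norm_zero]
    positivity

variable [MeasurableSpace E] [BorelSpace E] [SecondCountableTopology E]

theorem measurable_pastNoise_trajectory (hF : Measurable F)
    (hζ1 : ∀ ω, ζ 1 ω = z 1 + σ • ξ 0 ω)
    (hζ : ∀ m, 1 ≤ m → m < M → ∀ ω, ζ (m + 1) ω = F (ζ m ω) + σ • ξ m ω) :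
    ∀ k, 1 ≤ k → k ≤ M → Measurable[pastNoise ξ k] (ζ k) := by
  intro k hk
  induction k, hk using Nat.le_induction with
  | base =>
    intro _
    rw [funext hζ1]
    exact measurable_const.add ((measurable_pastNoise zero_lt_one).const_smul σ)
  | succ k hk ih =>
    intro hkM
    rw [funext (hζ k hk (by omega))]
    exact (hF.comp ((ih (by omega)).mono (pastNoise_mono k.le_succ) le_rfl)).add
      ((measurable_pastNoise k.lt_succ_self).const_smul σ)

theorem measurable_pastNoise_stoppedDrift (hF : Measurable F)
    (hz : ∀ m, 1 ≤ m → m < M → z (m + 1) = F (z m))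
    (hζ1 : ∀ ω, ζ 1 ω = z 1 + σ • ξ 0 ω)
    (hζ : ∀ m, 1 ≤ m → m < M → ∀ ω, ζ (m + 1) ω = F (ζ m ω) + σ • ξ m ω)
    {k : ℕ} (hk : k < M) :
    Measurable[pastNoise ξ k] (stoppedDrift (fun k ω => ζ k ω - z k) ξ σ r k) := by
  rcases Nat.eq_zero_or_pos k with rfl | hk1
  · rw [stoppedDrift_zero hζ1]
    exact measurable_const
  have hζm := measurable_pastNoise_trajectory hF hζ1 hζ
  have htube : MeasurableSet[pastNoise ξ k] (tubeEvent (fun k ω => ζ k ω - z k) r k) :=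
    measurableSet_tubeEvent fun j hj => by
      rw [Finset.mem_Icc] at hj
      exact ((hζm j hj.1 (by omega)).mono (pastNoise_mono hj.2) le_rfl).sub measurable_const
  rw [stoppedDrift, funext (trajectory_error_succ_sub_noise hz hζ hk1 hk)]
  exact ((hF.comp (hζm k hk1 hk.le)).sub measurable_const).indicator htube

end Trajectory

theorem finite_horizon_tube_exit_general
    {Ω : Type*} [MeasureSpace Ω] [IsProbabilityMeasure (ℙ : Measure Ω)]
    {d : ℕ} {M : ℕ}
    (ξ : ℕ → Ω → EuclideanSpace ℝ (Fin d))
    (hξmeas : ∀ m, Measurable (ξ m))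
    (hξindep : iIndepFun (fun m : Fin M => ξ (m : ℕ)) ℙ)
    (hξsq : ∀ m, m < M → Integrable (fun ω => ‖ξ m ω‖ ^ 2) ℙ)
    (hξmean : ∀ m, m < M → ∫ ω, ξ m ω = 0)
    {ν : ℝ}
    (hξmom : ∀ m, m < M → ∫ ω, ‖ξ m ω‖ ^ 2 ≤ ν ^ 2)
    {σ : ℝ}
    (F : EuclideanSpace ℝ (Fin d) → EuclideanSpace ℝ (Fin d))
    (hF : Measurable F)
    (z : ℕ → EuclideanSpace ℝ (Fin d))
    (hz : ∀ m, 1 ≤ m → m < M → z (m + 1) = F (z m))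
    (ζ : ℕ → Ω → EuclideanSpace ℝ (Fin d))
    (hζ1 : ∀ ω, ζ 1 ω = z 1 + σ • ξ 0 ω)
    (hζ : ∀ m, 1 ≤ m → m < M → ∀ ω, ζ (m + 1) ω = F (ζ m ω) + σ • ξ m ω)
    {r : ℝ} (hr : 0 < r)
    {ρ : ℝ} (hρ0 : 0 ≤ ρ) (hρ1 : ρ < 1)
    (hLip : ∀ a ∈ ⋃ m ∈ Set.Icc 1 M, Metric.closedBall (z m) r,
            ∀ b ∈ ⋃ m ∈ Set.Icc 1 M, Metric.closedBall (z m) r,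
            ‖F a - F b‖ ≤ ρ * ‖a - b‖) :
    (ℙ {ω | ∃ k, 1 ≤ k ∧ k ≤ M ∧ r < ‖ζ k ω - z k‖}).toReal
      ≤ (M / r ^ 2) * (σ ^ 2 * ν ^ 2 / (1 - ρ ^ 2)) := by
  set A := stoppedDrift (fun k ω => ζ k ω - z k) ξ σ r
  have hξL2 : ∀ k < M, MemLp (ξ k) 2 ℙ := fun k hk =>
    (memLp_two_iff_integrable_sq_norm (hξmeas k).aestronglyMeasurable).2 (hξsq k hk)
  have hApast : ∀ k < M, Measurable[pastNoise ξ k] (A k) := fun k hk =>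
    measurable_pastNoise_stoppedDrift hF hz hζ1 hζ hk
  have hAsucc : ∀ k, k + 1 < M → ∀ ω, ‖A (k + 1) ω‖ ≤ ρ * ‖A k ω + σ • ξ k ω‖ :=
    fun k hk => norm_stoppedDrift_succ_le hz hζ hr.le hρ0 hLip hk
  have hAL2 : ∀ k < M, MemLp (A k) 2 ℙ :=
    memLp_two_of_norm_succ_le (stoppedDrift_zero hζ1)
      (fun k hk => ((hApast k hk).mono (pastNoise_le hξmeas k) le_rfl).aestronglyMeasurable)
      hξL2 hAsucc
  have hmoment := integral_norm_add_smul_sq_le_of_contraction hρ0 hρ1 (stoppedDrift_zero hζ1) hAL2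
    (fun k hk => indepFun_of_measurable_pastNoise hξindep hξmeas hk (hApast k hk))
    hξL2 hξmean hξmom hAsucc
  calc (ℙ {ω | ∃ k, 1 ≤ k ∧ k ≤ M ∧ r < ‖ζ k ω - z k‖}).toReal
      ≤ ∑ k ∈ Finset.range M, (ℙ : Measure Ω).real {ω | r < ‖A k ω + σ • ξ k ω‖} :=
        (measureReal_mono (setOf_exists_lt_norm_subset_biUnion M) (measure_ne_top _ _)).trans
          (measureReal_biUnion_finset_le _ _)
    _ ≤ ∑ k ∈ Finset.range M, σ ^ 2 * ν ^ 2 / (1 - ρ ^ 2) / r ^ 2 := by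
        refine Finset.sum_le_sum fun k hk => ?_
        rw [Finset.mem_range] at hk
        have hL2 := ((hAL2 k hk).add ((hξL2 k hk).const_smul σ)).integrable_norm_pow'
        exact (measureReal_lt_norm_le_integral_norm_sq_div hL2 hr).trans
          (div_le_div_of_nonneg_right (hmoment k hk) (by positivity))
    _ = (M / r ^ 2) * (σ ^ 2 * ν ^ 2 / (1 - ρ ^ 2)) := by
        rw [Finset.sum_const, Finset.card_range, nsmul_eq_mul]
        ring

/-- **Finite-horizon tube-exit probability (Corollary 1).**
In the stochastic inner recursion setup, the probability that the stochastic
trajectory exits the `r`-tube within the horizon `M` — i.e. the probability of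
the event `{τ_r ≤ M} = {∃ k ∈ {1,…,M}, ‖e k‖ > r}` — satisfies
`P(τ_r ≤ M) ≤ (M / r²) · σ²ν² / (1 - ρ²)`. -/
theorem finite_horizon_tube_exit
    {Ω : Type*} [MeasureSpace Ω] [IsProbabilityMeasure (ℙ : Measure Ω)]
    {d : ℕ} {M : ℕ} (hM : 1 ≤ M)
    (ξ : ℕ → Ω → EuclideanSpace ℝ (Fin d))
    (hξmeas : ∀ m, Measurable (ξ m))
    (hξindep : iIndepFun (fun m : Fin M => ξ (m : ℕ)) ℙ)
    (hξint : ∀ m, m < M → Integrable (ξ m) ℙ)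
    (hξsq : ∀ m, m < M → Integrable (fun ω => ‖ξ m ω‖ ^ 2) ℙ)
    (hξmean : ∀ m, m < M → ∫ ω, ξ m ω = 0)
    {ν : ℝ} (hν : 0 ≤ ν)
    (hξmom : ∀ m, m < M → ∫ ω, ‖ξ m ω‖ ^ 2 ≤ ν ^ 2)
    {σ : ℝ} (hσ : 0 ≤ σ)
    (F : EuclideanSpace ℝ (Fin d) → EuclideanSpace ℝ (Fin d))
    (hF : Measurable F)
    (z : ℕ → EuclideanSpace ℝ (Fin d))
    (hz : ∀ m, 1 ≤ m → m < M → z (m + 1) = F (z m))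
    (ζ : ℕ → Ω → EuclideanSpace ℝ (Fin d))
    (hζ1 : ∀ ω, ζ 1 ω = z 1 + σ • ξ 0 ω)
    (hζ : ∀ m, 1 ≤ m → m < M → ∀ ω, ζ (m + 1) ω = F (ζ m ω) + σ • ξ m ω)
    {r : ℝ} (hr : 0 < r)
    {ρ : ℝ} (hρ0 : 0 ≤ ρ) (hρ1 : ρ < 1)
    (hLip : ∀ a ∈ ⋃ m ∈ Set.Icc 1 M, Metric.closedBall (z m) r,
            ∀ b ∈ ⋃ m ∈ Set.Icc 1 M, Metric.closedBall (z m) r,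
            ‖F a - F b‖ ≤ ρ * ‖a - b‖) :
    (ℙ {ω | ∃ k, 1 ≤ k ∧ k ≤ M ∧ r < ‖ζ k ω - z k‖}).toReal
      ≤ (M / r ^ 2) * (σ ^ 2 * ν ^ 2 / (1 - ρ ^ 2)) :=
  finite_horizon_tube_exit_general ξ hξmeas hξindep hξsq hξmean hξmom F hF z hz ζ hζ1 hζ hr hρ0 hρ1
    hLip
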